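/- arXiv:2510.19780 — 2 statements merged into one kernel-verified Lean document; each statement's English description precedes it below -/
import Mathlib

section
/- Let G = (V, E) be a weighted digraph with nonnegative weights satisfying Assumptions 1 and 2, let s ∈ V have no incoming edges, and let t be a positive integer. If u ∈ Near_t(s) and P is the shortest path from s to u in G, then every edge ab of P satisfies ab ∈ E_t(a), i.e., ab is among the t smallest-weight outgoing edges of a. -/
/-- A path from `s` to `t` in the digraph with edge set `E`: a finite sequence of edges
in which the head of each edge equals the tail of the next, starting at `s`, ending at `t`
(the empty sequence is a path from `s` to `s`). Paths need not be simple. -/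
inductive IsPath {V : Type*} (E : Set (V × V)) : V → V → List (V × V) → Prop
  | nil (s : V) : IsPath E s s []
  | cons {s u t : V} {P : List (V × V)} :
      (s, u) ∈ E → IsPath E u t P → IsPath E s t ((s, u) :: P)

/-- The weight of a path: the sum of its edge weights. -/
def pweight {V : Type*} (w : V × V → ℝ) (P : List (V × V)) : ℝ :=
  (P.map w).sum

/-- `distG E w u v` is the minimum weight of a path from `u` to `v`
(`+∞` if there is no such path). -/
noncomputable def distG {V : Type*} (E : Set (V × V)) (w : V × V → ℝ) (u v : V) : EReal :=
  sInf {r : EReal | ∃ P : List (V × V), IsPath E u v P ∧ r = (pweight w P : EReal)}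

/-- `v` is reachable from `u`. -/
def Reach {V : Type*} (E : Set (V × V)) (u v : V) : Prop :=
  ∃ P : List (V × V), IsPath E u v P

/-- Assumption 1: every proper (contiguous) subpath of a path has strictly smaller weight. -/
def Assumption1 {V : Type*} (E : Set (V × V)) (w : V × V → ℝ) : Prop :=
  ∀ (s t : V) (P : List (V × V)), IsPath E s t P →
    ∀ A P' B : List (V × V), P = A ++ P' ++ B → A ++ B ≠ [] →
      pweight w P' < pweight w P

/-- Assumption 2: for a fixed origin `u`, no two paths from `u` to distinct
targets have equal weight. -/
def Assumption2 {V : Type*} (E : Set (V × V)) (w : V × V → ℝ) : Prop :=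
  ∀ (u x y : V) (P₁ P₂ : List (V × V)), IsPath E u x P₁ → IsPath E u y P₂ → x ≠ y →
    pweight w P₁ ≠ pweight w P₂

/-- The edge set of the subgraph induced on the complement of `Z` (the graph `G − Z`). -/
def ERemove {V : Type*} (E : Set (V × V)) (Z : Set V) : Set (V × V) :=
  {e ∈ E | e.1 ∉ Z ∧ e.2 ∉ Z}

/-- `N` is the set of the `t` vertices distinct from `s` that are nearest to `s`
with respect to `distG` (or all vertices other than `s` reachable from `s`, if fewer
than `t` of them are reachable). -/
def IsNearSet {V : Type*} (E : Set (V × V)) (w : V × V → ℝ) (s : V) (t : ℕ)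
    (N : Finset V) : Prop :=
  s ∉ N ∧ (∀ x ∈ N, Reach E s x) ∧
  (∀ x ∈ N, ∀ y : V, y ∉ N → y ≠ s → Reach E s y → distG E w s x ≤ distG E w s y) ∧
  (N.card = t ∨ (N.card < t ∧ ∀ y : V, y ≠ s → Reach E s y → y ∈ N))

/-- `(a, b)` belongs to `E_t(a)`, i.e. it is among the `t` smallest-weight
outgoing edges of `a`. -/
def InTopT {V : Type*} (E : Set (V × V)) (w : V × V → ℝ) (t : ℕ) (a b : V) : Prop :=
  (a, b) ∈ E ∧ {c : V | (a, c) ∈ E ∧ w (a, c) < w (a, b)}.ncard < t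

/-- `(E', w')` is obtained from `(E, w)` by contracting `X` into `s`:
its vertices avoid `X`; it keeps every edge of `E` avoiding `X`, and has an edge `s → v`
whenever some `x ∈ X` has an edge `x → v` with `v ∉ X`; among the resulting parallel
edges only one of smallest weight (`w (s, v)` itself, or `distG s x + w (x, v)`) is kept. -/
def IsContraction {V : Type*} (E : Set (V × V)) (w : V × V → ℝ) (s : V) (X : Set V)
    (E' : Set (V × V)) (w' : V × V → ℝ) : Prop :=
  (∀ u v : V, ((u, v) ∈ E' ↔
      (u ∉ X ∧ v ∉ X ∧ ((u, v) ∈ E ∨ (u = s ∧ ∃ x ∈ X, (x, v) ∈ E))))) ∧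
  (∀ u v : V, (u, v) ∈ E' → u ≠ s → w' (u, v) = w (u, v)) ∧
  (∀ v : V, (s, v) ∈ E' →
      ((w' (s, v) : EReal) =
        sInf {r : EReal | ((s, v) ∈ E ∧ r = (w (s, v) : EReal)) ∨
          ∃ x ∈ X, (x, v) ∈ E ∧ r = distG E w s x + (w (x, v) : EReal)}))

lemma path_split' {V : Type*} {E : Set (V × V)} {a b : V} :
    ∀ {s u : V} {P : List (V × V)}, IsPath E s u P → (a, b) ∈ P →
    ∃ A B, P = A ++ (a, b) :: B ∧ IsPath E s a A ∧ (a, b) ∈ E := by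
  intro s u P hP
  induction hP with
  | nil => intro h; simp at h
  | @cons s v t P he hPp ih =>
    intro hmem
    rcases List.mem_cons.mp hmem with h | h
    · obtain ⟨rfl, rfl⟩ := Prod.mk.injEq a b s v ▸ h
      exact ⟨[], P, by simp, IsPath.nil a, he⟩
    · obtain ⟨A, B, hEq, hA, hE⟩ := ih h
      exact ⟨(s, v) :: A, B, by simp [hEq], IsPath.cons he hA, hE⟩

lemma path_append' {V : Type*} {E : Set (V × V)} {c : V} :
    ∀ {s a : V} {A : List (V × V)}, IsPath E s a A → (a, c) ∈ E →
    IsPath E s c (A ++ [(a, c)]) := by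
  intro s a A h
  induction h with
  | nil s => intro he; exact IsPath.cons he (IsPath.nil c)
  | cons he hPp ih => intro h2; exact IsPath.cons he (ih h2)

lemma pweight_append' {V : Type*} (w : V × V → ℝ) (A B : List (V × V)) :
    pweight w (A ++ B) = pweight w A + pweight w B := by
  simp [pweight]

/-- If `u ∈ Near_t(s)` and `P` is the shortest path from `s` to `u`, then every edge
`ab` of `P` is among the `t` smallest-weight outgoing edges of `a`. -/
theorem stmt3 {V : Type*} [Fintype V]
    (E : Set (V × V)) (w : V × V → ℝ)
    (hw : ∀ e ∈ E, 0 ≤ w e)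
    (hA1 : Assumption1 E w) (hA2 : Assumption2 E w)
    (s : V) (hs : ∀ u : V, (u, s) ∉ E)
    (t : ℕ) (ht : 0 < t)
    (N : Finset V) (hN : IsNearSet E w s t N)
    (u : V) (hu : u ∈ N)
    (P : List (V × V)) (hP : IsPath E s u P)
    (hshort : ∀ Q : List (V × V), IsPath E s u Q → pweight w P ≤ pweight w Q) :
    ∀ e ∈ P, InTopT E w t e.1 e.2 := by
  classical
  rintro ⟨a, b⟩ he
  obtain ⟨A, B, hPeq, hA, hab⟩ := path_split' hP he
  refine ⟨hab, ?_⟩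
  show {c : V | (a, c) ∈ E ∧ w (a, c) < w (a, b)}.ncard < t
  have hdistu : distG E w s u = (pweight w P : EReal) := by
    apply le_antisymm
    · exact sInf_le ⟨P, hP, rfl⟩
    · apply le_sInf
      rintro r ⟨Q, hQ, rfl⟩
      exact_mod_cast hshort Q hQ
  -- prefix bound
  have hpre : pweight w A + w (a, b) ≤ pweight w P := by
    rcases B with _ | ⟨x, B'⟩
    · rw [hPeq, pweight_append']
      simp [pweight]
    · have := hA1 s u P hP [] (A ++ [(a, b)]) (x :: B')
        (by simp [hPeq]) (by simp)
      rw [pweight_append'] at this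
      simp only [pweight, List.map_cons, List.map_nil, List.sum_cons,
        List.sum_nil, add_zero] at this ⊢
      linarith
  have hsub : {c : V | (a, c) ∈ E ∧ w (a, c) < w (a, b)} ⊆ (↑(N.erase u) : Set V) := by
    rintro c ⟨hcE, hcw⟩
    have hcpath : IsPath E s c (A ++ [(a, c)]) := path_append' hA hcE
    have hwc : pweight w (A ++ [(a, c)]) = pweight w A + w (a, c) := by
      rw [pweight_append']; simp [pweight]
    have hlt : pweight w (A ++ [(a, c)]) < pweight w P := by
      rw [hwc]; linarith
    have hcu : c ≠ u := by
      rintro rfl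
      exact absurd (hshort _ hcpath) (not_le.mpr hlt)
    have hcs : c ≠ s := by rintro rfl; exact hs a hcE
    have hcN : c ∈ N := by
      by_contra hcN
      have hle := hN.2.2.1 u hu c hcN hcs ⟨_, hcpath⟩
      have h2 : distG E w s c ≤ (pweight w (A ++ [(a, c)]) : EReal) :=
        sInf_le ⟨_, hcpath, rfl⟩
      rw [hdistu] at hle
      have h3 : (pweight w (A ++ [(a, c)]) : EReal) < (pweight w P : EReal) := by
        exact_mod_cast hlt
      exact absurd (le_trans hle h2) (not_le.mpr h3)
    simp only [Finset.coe_erase, Set.mem_diff, Set.mem_singleton_iff]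
    exact ⟨hcN, hcu⟩
  have h1 : {c : V | (a, c) ∈ E ∧ w (a, c) < w (a, b)}.ncard ≤ (N.erase u).card := by
    have := Set.ncard_le_ncard hsub (Finset.finite_toSet _)
    rwa [Set.ncard_coe_finset] at this
  have h2 : (N.erase u).card < N.card := Finset.card_erase_lt_of_mem hu
  have h3 : N.card ≤ t := by
    rcases hN.2.2.2 with h | h
    · omega
    · omega
  omega
end

section
/- Let G = (V, E) be a digraph in which each edge e carries a real cost c(e) and a positive real time τ(e), let pq ∈ E, and let λ_old, λ_new ∈ ℝ with λ_new ≤ λ_old. Suppose φ : V → ℝ attests λ_old in G − pq (the graph G with the edge pq removed). Define weights on G − pq by w(uv) = c(uv) − λ_new·τ(uv) − φ(u) + φ(v) (these are nonnegative), let d(v) ∈ [0, +∞] be the w-distance from q to v in G − pq (+∞ if v is unreachable from q), let Γ = λ_new·τ(pq) − c(pq) + φ(p) − φ(q), and assume every path from q to p in G − pq has total w-weight at least Γ. Let Δ be the maximum of 0, Γ, and the values d(v) − w(uv) over all edges uv ∈ E \ {pq} with d(u) = +∞ and d(v) < +∞. Define δ(v) = d(v) if d(v) < +∞ and δ(v)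 = Δ otherwise, and set φ'(v) = φ(v) − δ(v). Then φ' attests λ_new in G. -/
/-- `φ` attests `λ` in the digraph with edge set `E`:
`c(uv) − λ·τ(uv) − φ(u) + φ(v) ≥ 0` for every edge `uv`. -/
def Attests {V : Type*} (E : Set (V × V)) (c τ : V × V → ℝ) (lam : ℝ) (φ : V → ℝ) : Prop :=
  ∀ e ∈ E, 0 ≤ c e - lam * τ e - φ e.1 + φ e.2

/-!
Since `τ > 0` and `λ_new ≤ λ_old`, the reduced costs `w` are nonnegative on `G − pq`, and
`φ − δ` attests `λ_new` on an edge `uv` exactly when `δ(v) ≤ w(uv) + δ(u)`. On `G − pq` this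
is the triangle inequality for the distances `d` between reachable vertices; an edge from an
unreachable vertex `u` (where `δ(u) = Δ`) into a reachable `v` is covered because `Δ` dominates
`d(v) − w(uv)`, and between unreachable vertices both sides are shifted by the same `Δ ≥ 0`.
The new edge has `w(pq) = −Γ`, `δ(q) = d(q) = 0`, and `δ(p) ≥ Γ` because `d(p) ≥ Γ` and `Δ ≥ Γ`.
-/

section Paths

variable {V : Type*} {E : Set (V × V)} {w : V × V → ℝ}

lemma IsPath.append_edge {s t v : V} {P : List (V × V)} (h : IsPath E s t P)
    (he : (t, v) ∈ E) : IsPath E s v (P ++ [(t, v)]) := by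
  induction h with
  | nil s => exact .cons he (.nil v)
  | cons hsu _ ih => exact .cons hsu (ih he)

lemma pweight_append_edge (P : List (V × V)) (e : V × V) :
    pweight w (P ++ [e]) = pweight w P + w e := by
  simp [pweight]

lemma IsPath.pweight_nonneg (hw : ∀ e ∈ E, 0 ≤ w e) {s t : V} {P : List (V × V)}
    (h : IsPath E s t P) : 0 ≤ pweight w P := by
  induction h with
  | nil s => simp [pweight]
  | cons hsu _ ih =>
    simp only [pweight, List.map_cons, List.sum_cons] at ih ⊢
    linarith [hw _ hsu]

end Paths

section Distance

variable {V : Type*} {E : Set (V × V)} {w : V × V → ℝ} {u v x : V}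

lemma distG_le_pweight {P : List (V × V)} (hP : IsPath E u v P) :
    distG E w u v ≤ pweight w P :=
  sInf_le ⟨P, hP, rfl⟩

lemma le_distG {r : EReal} (h : ∀ P, IsPath E u v P → r ≤ pweight w P) :
    r ≤ distG E w u v :=
  le_sInf <| by rintro _ ⟨P, hP, rfl⟩; exact h P hP

lemma distG_self_le_zero : distG E w u u ≤ 0 := by
  simpa [pweight] using distG_le_pweight (w := w) (IsPath.nil (E := E) u)

lemma distG_nonneg (hw : ∀ e ∈ E, 0 ≤ w e) : 0 ≤ distG E w u v :=
  le_distG fun _ hP => EReal.coe_nonneg.2 (hP.pweight_nonneg hw)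

lemma distG_self (hw : ∀ e ∈ E, 0 ≤ w e) : distG E w u u = 0 :=
  le_antisymm distG_self_le_zero (distG_nonneg hw)

lemma distG_le_add_edge (he : (v, x) ∈ E) :
    distG E w u x ≤ distG E w u v + w (v, x) := by
  rw [← EReal.sub_le_iff_le_add (.inl (EReal.coe_ne_bot _)) (.inl (EReal.coe_ne_top _))]
  refine le_distG fun P hP => ?_
  rw [EReal.sub_le_iff_le_add (.inl (EReal.coe_ne_bot _)) (.inl (EReal.coe_ne_top _))]
  calc distG E w u x ≤ pweight w (P ++ [(v, x)]) := distG_le_pweight (hP.append_edge he)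
    _ = (pweight w P : EReal) + w (v, x) := by rw [pweight_append_edge, EReal.coe_add]

end Distance

section Attests

variable {V : Type*} {E : Set (V × V)} {c τ : V × V → ℝ} {lam : ℝ} {φ : V → ℝ}

lemma Attests.mono_lam {lam' : ℝ} (h : Attests E c τ lam φ) (hτ : ∀ e ∈ E, 0 ≤ τ e)
    (hle : lam' ≤ lam) : Attests E c τ lam' φ := fun e he => by
  nlinarith [h e he, hτ e he]

lemma attests_sub_of_le {δ : V → ℝ}
    (h : ∀ e ∈ E, δ e.2 ≤ c e - lam * τ e - φ e.1 + φ e.2 + δ e.1) :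
    Attests E c τ lam (φ - δ) := fun e he => by
  simp only [Pi.sub_apply]
  linarith [h e he]

end Attests

section Truncation

variable {Δ : ℝ}

lemma le_ite_toReal {x : EReal} {r : ℝ} (hx : (r : EReal) ≤ x) (hΔ : r ≤ Δ) :
    r ≤ if x = ⊤ then Δ else x.toReal := by
  induction x using EReal.rec <;> simp_all

lemma ite_toReal_le_add {x y : EReal} {a : ℝ} (hx : x ≠ ⊥) (hxy : x ≤ y + a) (ha : 0 ≤ a)
    (hΔ : y = ⊤ → x ≠ ⊤ → x.toReal - a ≤ Δ) :
    (if x = ⊤ then Δ else x.toReal) ≤ a + if y = ⊤ then Δ else y.toReal := by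
  induction x using EReal.rec <;> induction y using EReal.rec <;>
    simp_all [← EReal.coe_add] <;> linarith

end Truncation

theorem stmt11_general {V : Type*} [Fintype V]
    (E : Set (V × V)) (c τ : V × V → ℝ)
    (hτ : ∀ e ∈ E, 0 < τ e)
    (p q : V)
    (lamOld lamNew : ℝ) (hle : lamNew ≤ lamOld)
    (φ : V → ℝ) (hφ : Attests (E \ {(p, q)}) c τ lamOld φ)
    (w : V × V → ℝ) (hw : ∀ e : V × V, w e = c e - lamNew * τ e - φ e.1 + φ e.2)
    (d : V → EReal) (hd : ∀ v : V, d v = distG (E \ {(p, q)}) w q v)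
    (Γ : ℝ) (hΓ : Γ = lamNew * τ (p, q) - c (p, q) + φ p - φ q)
    (hpaths : ∀ P : List (V × V), IsPath (E \ {(p, q)}) q p P → Γ ≤ pweight w P)
    (Δ : ℝ)
    (hΔ : Δ = sSup ({0, Γ} ∪ {x : ℝ | ∃ u v : V, (u, v) ∈ E \ {(p, q)} ∧
      d u = ⊤ ∧ d v ≠ ⊤ ∧ x = (d v).toReal - w (u, v)}))
    (δ : V → ℝ) (hδ : ∀ v : V, δ v = if d v = ⊤ then Δ else (d v).toReal)
    (φ' : V → ℝ) (hφ' : ∀ v : V, φ' v = φ v - δ v) :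
    Attests E c τ lamNew φ' := by
  have hw_nonneg : ∀ e ∈ E \ {(p, q)}, 0 ≤ w e := fun e he =>
    hw e ▸ hφ.mono_lam (fun e he => (hτ e he.1).le) hle e he
  have hd_ne_bot : ∀ v, d v ≠ ⊥ := fun v =>
    ne_bot_of_le_ne_bot EReal.zero_ne_bot (hd v ▸ distG_nonneg hw_nonneg)
  have hΔ_ge : ∀ x ∈ ({0, Γ} ∪ {x : ℝ | ∃ u v : V, (u, v) ∈ E \ {(p, q)} ∧
      d u = ⊤ ∧ d v ≠ ⊤ ∧ x = (d v).toReal - w (u, v)}), x ≤ Δ := fun x hx => by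
    refine hΔ ▸ le_csSup (Set.Finite.bddAbove ?_) hx
    refine (Set.toFinite _).union
      ((Set.finite_range fun e : V × V => (d e.2).toReal - w e).subset ?_)
    rintro _ ⟨u, v, -, -, -, rfl⟩
    exact ⟨(u, v), rfl⟩
  obtain rfl : φ' = φ - δ := funext hφ'
  refine attests_sub_of_le fun ⟨u, v⟩ he => ?_
  rw [← hw, hδ, hδ]
  by_cases hpq : (u, v) = (p, q)
  · obtain ⟨rfl, rfl⟩ := Prod.mk.inj hpq
    have hdq : d v = 0 := hd v ▸ distG_self hw_nonneg
    have hwpq : w (u, v) = -Γ := by rw [hw, hΓ]; ring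
    have hdp : Γ ≤ if d u = ⊤ then Δ else (d u).toReal :=
      le_ite_toReal (hd u ▸ le_distG fun P hP => EReal.coe_le_coe_iff.2 (hpaths P hP))
        (hΔ_ge Γ (by simp))
    simp only [hdq, EReal.zero_ne_top, if_false, EReal.toReal_zero, hwpq]
    linarith
  · have he' : (u, v) ∈ E \ {(p, q)} := ⟨he, hpq⟩
    exact ite_toReal_le_add (hd_ne_bot v) (hd u ▸ hd v ▸ distG_le_add_edge he')
      (hw_nonneg _ he') fun hu hv => hΔ_ge _ (.inr ⟨u, v, he', hu, hv, rfl⟩)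

/-- Updating the potential after inserting the edge `pq`: if `φ` attests `λ_old` in
`G − pq`, `λ_new ≤ λ_old`, `d` is the `w`-distance from `q` in `G − pq` (for
`w(uv) = c(uv) − λ_new·τ(uv) − φ(u) + φ(v)`), every path `q → p` in `G − pq` has
`w`-weight at least `Γ`, and `Δ` is the maximum of `0`, `Γ` and the values
`d(v) − w(uv)` over edges `uv ≠ pq` with `d(u) = +∞` and `d(v) < +∞`, then
`φ'(v) = φ(v) − δ(v)` (with `δ(v) = d(v)` when finite, `δ(v) = Δ` otherwise)
attests `λ_new` in `G`. -/
theorem stmt11 {V : Type*} [Fintype V]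
    (E : Set (V × V)) (c τ : V × V → ℝ)
    (hτ : ∀ e ∈ E, 0 < τ e)
    (p q : V) (hpq : (p, q) ∈ E)
    (lamOld lamNew : ℝ) (hle : lamNew ≤ lamOld)
    (φ : V → ℝ) (hφ : Attests (E \ {(p, q)}) c τ lamOld φ)
    (w : V × V → ℝ) (hw : ∀ e : V × V, w e = c e - lamNew * τ e - φ e.1 + φ e.2)
    (d : V → EReal) (hd : ∀ v : V, d v = distG (E \ {(p, q)}) w q v)
    (Γ : ℝ) (hΓ : Γ = lamNew * τ (p, q) - c (p, q) + φ p - φ q)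
    (hpaths : ∀ P : List (V × V), IsPath (E \ {(p, q)}) q p P → Γ ≤ pweight w P)
    (Δ : ℝ)
    (hΔ : Δ = sSup ({0, Γ} ∪ {x : ℝ | ∃ u v : V, (u, v) ∈ E \ {(p, q)} ∧
      d u = ⊤ ∧ d v ≠ ⊤ ∧ x = (d v).toReal - w (u, v)}))
    (δ : V → ℝ) (hδ : ∀ v : V, δ v = if d v = ⊤ then Δ else (d v).toReal)
    (φ' : V → ℝ) (hφ' : ∀ v : V, φ' v = φ v - δ v) :
    Attests E c τ lamNew φ' :=
  stmt11_general E c τ hτ p q lamOld lamNew hle φ hφ w hw d hd Γ hΓ hpaths Δ hΔ δ hδ φ' hφ'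
end
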